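/- arXiv:2604.08792 — 5 statements merged into one kernel-verified Lean document; each statement's English description precedes it below -/
import Mathlib

section
/- Fix functions P₁, …, P_n : X → Y and a finite atom universe U of subsets of X. For each pair of indices i < j let W(i,j) be a finite family of subsets of U such that: (validity) every T ∈ W(i,j) satisfies P_i x ≠ P_j x for all x ∈ ⋂_{a∈T} a; and (coverage-completeness) for every T' ⊆ U with ⋂_{a∈T'} a nonempty and P_i x ≠ P_j x for all x ∈ ⋂_{a∈T'} a, there exists T ∈ W(i,j) with T ⊆ T'. Let λ ≥ 0. For S ⊆ U with φ_S := ⋂_{a∈S} a nonempty, define f(S) := |{(i,j) : i < j and ∃ T ∈ W(i,j), T ⊆ S}| − λ·|S| and g(S) := dppre(φ_S) − λ·|S|, where dppre(φ_S) is the number of pairs i < j with P_i x ≠ P_j x for all x ∈ φ_S. Then for any S* ⊆ U with φ_{S*} nonempty: S* maximizes f over {S ⊆ U : φ_S nonempty} if and only if S* maximizes g over the same set. In particular, maximizing the witness-count objective f is equivalent to maximizing dppre(ψ) − λ·complexity(ψ) over all satisfiable cubes ψ over U. -/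
/-- Equivalence of the witness-count objective `f` with the true
precondition-selection objective `g = dppre(φ_S) − λ·|S|`, given validity and
coverage-completeness of the families of distinguishing cubes `W i j`. -/
theorem stmt_1 {X Y : Type*} {n : ℕ} (P : Fin n → X → Y) (U : Finset (Set X))
    (W : Fin n → Fin n → Finset (Finset (Set X)))
    (hWsub : ∀ i j : Fin n, i < j → ∀ T ∈ W i j, T ⊆ U)
    (hvalid : ∀ i j : Fin n, i < j → ∀ T ∈ W i j,
      ∀ x ∈ ⋂₀ (↑T : Set (Set X)), P i x ≠ P j x)
    (hcov : ∀ i j : Fin n, i < j → ∀ T' ⊆ U, (⋂₀ (↑T' : Set (Set X))).Nonempty →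
      (∀ x ∈ ⋂₀ (↑T' : Set (Set X)), P i x ≠ P j x) → ∃ T ∈ W i j, T ⊆ T')
    (lam : ℝ) (hlam : 0 ≤ lam)
    (f g : Finset (Set X) → ℝ)
    (hf : ∀ S : Finset (Set X),
      f S = ({p : Fin n × Fin n | p.1 < p.2 ∧ ∃ T ∈ W p.1 p.2, T ⊆ S}.ncard : ℝ)
        - lam * S.card)
    (hg : ∀ S : Finset (Set X),
      g S = ({p : Fin n × Fin n | p.1 < p.2 ∧
          ∀ x ∈ ⋂₀ (↑S : Set (Set X)), P p.1 x ≠ P p.2 x}.ncard : ℝ)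
        - lam * S.card)
    (Sstar : Finset (Set X)) (hSsub : Sstar ⊆ U)
    (hSne : (⋂₀ (↑Sstar : Set (Set X))).Nonempty) :
    (∀ S ⊆ U, (⋂₀ (↑S : Set (Set X))).Nonempty → f S ≤ f Sstar) ↔
    (∀ S ⊆ U, (⋂₀ (↑S : Set (Set X))).Nonempty → g S ≤ g Sstar) := by
  have key : ∀ S ⊆ U, (⋂₀ (↑S : Set (Set X))).Nonempty → f S = g S := by
    intro S hS hne
    rw [hf, hg]
    have hset : {p : Fin n × Fin n | p.1 < p.2 ∧ ∃ T ∈ W p.1 p.2, T ⊆ S}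
        = {p : Fin n × Fin n | p.1 < p.2 ∧
            ∀ x ∈ ⋂₀ (↑S : Set (Set X)), P p.1 x ≠ P p.2 x} := by
      ext ⟨i, j⟩
      simp only [Set.mem_setOf_eq]
      constructor
      · rintro ⟨hij, T, hT, hTS⟩
        refine ⟨hij, fun x hx => hvalid i j hij T hT x ?_⟩
        exact fun a ha => hx a (hTS ha)
      · rintro ⟨hij, hdist⟩
        exact ⟨hij, hcov i j hij S hS hne hdist⟩
    rw [hset]
  constructor
  · intro h S hS hne
    rw [← key S hS hne, ← key Sstar hSsub hSne]
    exact h S hS hne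
  · intro h S hS hne
    rw [key S hS hne, key Sstar hSsub hSne]
    exact h S hS hne
end

section
/- Let H be a finite nonempty set partitioned into clusters C₁, …, C_N, let k ≥ 1, let D ⊆ {1,…,N}, let F_p : D → {1,…,k} be a partial assignment, and let F : {1,…,N} → {1,…,k} be any total map extending F_p (F(i) = F_p(i) for all i ∈ D). Define P_j := ⋃_{i ∈ D, F_p(i)=j} C_i and B_j := ⋃_{i, F(i)=j} C_i. Then for every λ ≥ 0 and all nonnegative reals c₁, …, c_k: (1 − max_{j∈[k]} |B_j|/|H|) − λ·Σ_{j=1}^k c_j ≤ 1 − max_{j∈[k]} |P_j|/|H|. In particular, the objective value dpower(Q) − λ·Σ_j complexity(ψ_j) of any query induced by a completion F of the partial partition F_p is at most the upper bound U := 1 − max_j |P_j|/|H| computed by ComputeBranchUB. -/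
/-- Upper-bound soundness for the branch-and-bound search: the objective value
of the query induced by any completion `F` of a partial partition `Fp` is at
most the bound `U = 1 − max_j |P_j|/|H|` computed by `ComputeBranchUB`. -/
theorem stmt_5 {α : Type*} (H : Set α) (hfin : H.Finite) (hne : H.Nonempty)
    (N k : ℕ) (hk : 1 ≤ k)
    (C : Fin N → Set α)
    (hCsub : ∀ i, C i ⊆ H)
    (hCdisj : ∀ i j, i ≠ j → Disjoint (C i) (C j))
    (hCcover : ⋃ i, C i = H)
    (D : Finset (Fin N)) (Fp : Fin N → Fin k)
    (F : Fin N → Fin k) (hext : ∀ i ∈ D, F i = Fp i)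
    (Pbin Bbin : Fin k → Set α)
    (hPbin : ∀ j, Pbin j = {x | ∃ i ∈ D, Fp i = j ∧ x ∈ C i})
    (hBbin : ∀ j, Bbin j = {x | ∃ i, F i = j ∧ x ∈ C i})
    (lam : ℝ) (hlam : 0 ≤ lam) (c : Fin k → ℝ) (hc : ∀ j, 0 ≤ c j) :
    (1 - ⨆ j : Fin k, ((Bbin j).ncard : ℝ) / H.ncard) - lam * ∑ j : Fin k, c j
      ≤ 1 - ⨆ j : Fin k, ((Pbin j).ncard : ℝ) / H.ncard := by
  have hkne : Nonempty (Fin k) := ⟨⟨0, hk⟩⟩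
  have hBsub : ∀ j, Bbin j ⊆ H := by
    intro j x hx
    rw [hBbin] at hx
    obtain ⟨i, _, hxi⟩ := hx
    exact hCsub i hxi
  have hPB : ∀ j, Pbin j ⊆ Bbin j := by
    intro j x hx
    rw [hPbin] at hx; rw [hBbin]
    obtain ⟨i, hiD, hFi, hxi⟩ := hx
    exact ⟨i, by rw [hext i hiD, hFi], hxi⟩
  have hsup : (⨆ j : Fin k, ((Pbin j).ncard : ℝ) / H.ncard)
      ≤ ⨆ j : Fin k, ((Bbin j).ncard : ℝ) / H.ncard := by
    apply ciSup_mono (Set.Finite.bddAbove (Set.finite_range _))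
    intro j
    gcongr
    · exact hfin.subset (hBsub j)
    · exact hPB j
  have hsum : 0 ≤ lam * ∑ j : Fin k, c j :=
    mul_nonneg hlam (Finset.sum_nonneg fun j _ => hc j)
  linarith
end

section
/- Let φ : Set X be nonempty, H a finite set of functions X → Y, and C₁, …, C_N the sp-partition of H with respect to φ. Let (φ, ψ'₁, …, ψ'_k) be a valid query over H, define F(i) as the unique j with {φ} P {ψ'_j} for every P ∈ C_i, and set B_j := ⋃_{F(i)=j} C_i. Let ψ₁, …, ψ_k be any family of subsets of Y satisfying the separator conditions for the bins B₁, …, B_k. Then for every j: {P ∈ H : P '' φ ⊆ ψ_j} = {P ∈ H : P '' φ ⊆ ψ'_j}. Consequently the two queries induce the same partition of H, and dpower(φ, ψ₁, …, ψ_k) = dpower(φ, ψ'₁, …, ψ'_k). -/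
/-- Distinguishing-power part of MergeCluster completeness: any family of
separators `ψ` for the bins `B j` (induced from a valid query `(φ, ψ')` via the
mapping `F` on the sp-partition) yields exactly the same answer sets as the
original postconditions `ψ'`, hence the same disambiguation power. -/
theorem stmt_7 {X Y : Type*} (φ : Set X) (hφ : φ.Nonempty)
    (H : Set (X → Y)) (hfin : H.Finite)
    (N k : ℕ)
    (C : Fin N → Set (X → Y))
    (hCsub : ∀ i, C i ⊆ H)
    (hCdisj : ∀ i j, i ≠ j → Disjoint (C i) (C j))
    (hCcover : ⋃ i, C i = H)
    (hCsame : ∀ i, ∀ P ∈ C i, ∀ Q ∈ C i, P '' φ = Q '' φ)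
    (hCdiff : ∀ i j, i ≠ j → ∀ P ∈ C i, ∀ Q ∈ C j, P '' φ ≠ Q '' φ)
    (ψ' : Fin k → Set Y)
    (hvalidME : ∀ P ∈ H, ∀ i j : Fin k, i ≠ j → ¬(P '' φ ⊆ ψ' i ∧ P '' φ ⊆ ψ' j))
    (hvalidCov : ∀ P ∈ H, ∃ i : Fin k, P '' φ ⊆ ψ' i)
    (F : Fin N → Fin k)
    (hF : ∀ i, ∀ P ∈ C i, P '' φ ⊆ ψ' (F i))
    (B : Fin k → Set (X → Y))
    (hB : ∀ j, B j = {P | ∃ i, F i = j ∧ P ∈ C i})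
    (ψ : Fin k → Set Y)
    (hsep₁ : ∀ j, (⋃ P ∈ B j, P '' φ) ⊆ ψ j)
    (hsep₂ : ∀ j r, r ≠ j → ψ j ∩ (⋃ P ∈ B r, P '' φ) = ∅) :
    (∀ j, {P ∈ H | P '' φ ⊆ ψ j} = {P ∈ H | P '' φ ⊆ ψ' j}) ∧
    (1 - ⨆ i : Fin k, (({P ∈ H | P '' φ ⊆ ψ i}).ncard : ℝ) / H.ncard)
      = 1 - ⨆ i : Fin k, (({P ∈ H | P '' φ ⊆ ψ' i}).ncard : ℝ) / H.ncard := by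
  have key : ∀ j, {P ∈ H | P '' φ ⊆ ψ j} = {P ∈ H | P '' φ ⊆ ψ' j} := by
    intro j
    ext P
    simp only [Set.mem_setOf_eq]
    constructor
    · rintro ⟨hPH, hsub⟩
      refine ⟨hPH, ?_⟩
      obtain ⟨i, hPi⟩ : ∃ i, P ∈ C i := by
        have := hCcover ▸ hPH; simpa using this
      have hPB : P ∈ B (F i) := by rw [hB]; exact ⟨i, rfl, hPi⟩
      have hne : (P '' φ).Nonempty := hφ.image P
      obtain ⟨y, hy⟩ := hne
      have hymem : y ∈ ⋃ Q ∈ B (F i), Q '' φ := Set.mem_biUnion hPB hy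
      have hFj : F i = j := by
        by_contra h
        have := hsep₂ j (F i) h
        have : y ∈ ψ j ∩ ⋃ Q ∈ B (F i), Q '' φ := ⟨hsub hy, hymem⟩
        rw [hsep₂ j (F i) h] at this
        exact this
      exact hFj ▸ hF i P hPi
    · rintro ⟨hPH, hsub⟩
      refine ⟨hPH, ?_⟩
      obtain ⟨i, hPi⟩ : ∃ i, P ∈ C i := by
        have := hCcover ▸ hPH; simpa using this
      have hFj : F i = j := by
        by_contra h
        exact hvalidME P hPH (F i) j h ⟨hF i P hPi, hsub⟩
      have hPB : P ∈ B j := by rw [hB]; exact ⟨i, hFj, hPi⟩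
      intro y hy
      exact hsep₁ j (Set.mem_biUnion hPB hy)
  refine ⟨key, ?_⟩
  congr 1
  exact iSup_congr fun i => by rw [key i]
end

section
/- Let φ : Set X be nonempty, H a finite set of functions X → Y, and C₁, …, C_N the sp-partition of H with respect to φ. Let F : {1,…,N} → {1,…,k} be any mapping, define bins B_j := ⋃_{F(i)=j} C_i, and let ψ₁, …, ψ_k : Set Y satisfy the separator conditions for B₁, …, B_k. Then (φ, ψ₁, …, ψ_k) is a valid query over H, and moreover, for every cluster index i, every program P ∈ C_i, and every j ∈ {1,…,k}: P '' φ ⊆ ψ_j if and only if j = F(i). -/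
/-- MergeCluster query validity: for any mapping `F` of sp-clusters to bins and
any separators `ψ₁, …, ψ_k` for the induced bins `B j`, the query
`(φ, ψ₁, …, ψ_k)` is valid over `H`, and for every `P ∈ C i` we have
`P '' φ ⊆ ψ j ↔ j = F i`. -/
theorem stmt_10 {X Y : Type*} (φ : Set X) (hφ : φ.Nonempty)
    (H : Set (X → Y)) (hfin : H.Finite)
    (N k : ℕ)
    (C : Fin N → Set (X → Y))
    (hCsub : ∀ i, C i ⊆ H)
    (hCdisj : ∀ i j, i ≠ j → Disjoint (C i) (C j))
    (hCcover : ⋃ i, C i = H)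
    (hCsame : ∀ i, ∀ P ∈ C i, ∀ Q ∈ C i, P '' φ = Q '' φ)
    (hCdiff : ∀ i j, i ≠ j → ∀ P ∈ C i, ∀ Q ∈ C j, P '' φ ≠ Q '' φ)
    (F : Fin N → Fin k)
    (B : Fin k → Set (X → Y))
    (hB : ∀ j, B j = {P | ∃ i, F i = j ∧ P ∈ C i})
    (ψ : Fin k → Set Y)
    (hsep₁ : ∀ j, (⋃ P ∈ B j, P '' φ) ⊆ ψ j)
    (hsep₂ : ∀ j r, r ≠ j → ψ j ∩ (⋃ P ∈ B r, P '' φ) = ∅) :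
    (∀ P ∈ H, ∀ i j : Fin k, i ≠ j → ¬(P '' φ ⊆ ψ i ∧ P '' φ ⊆ ψ j)) ∧
    (∀ P ∈ H, ∃ i : Fin k, P '' φ ⊆ ψ i) ∧
    (∀ i : Fin N, ∀ P ∈ C i, ∀ j : Fin k, (P '' φ ⊆ ψ j ↔ j = F i)) := by

  have key : ∀ i : Fin N, ∀ P ∈ C i, ∀ j : Fin k, (P '' φ ⊆ ψ j ↔ j = F i) := by
    intro i P hP j
    have hPB : P ∈ B (F i) := by rw [hB]; exact ⟨i, rfl, hP⟩
    constructor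
    · intro hsub
      by_contra hne
      have hdisj := hsep₂ j (F i) (fun h => hne h.symm)
      obtain ⟨x, hx⟩ := hφ
      have hy : P x ∈ ψ j := hsub ⟨x, hx, rfl⟩
      have hy2 : P x ∈ ⋃ Q ∈ B (F i), Q '' φ :=
        Set.mem_biUnion hPB ⟨x, hx, rfl⟩
      have : P x ∈ (∅ : Set Y) := hdisj ▸ ⟨hy, hy2⟩
      exact this
    · rintro rfl
      exact fun y hy => hsep₁ (F i) (Set.mem_biUnion hPB hy)
  refine ⟨?_, ?_, key⟩
  · intro P hP a b hab ⟨ha, hb⟩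
    obtain ⟨i, hi⟩ := Set.mem_iUnion.mp (hCcover ▸ hP)
    exact hab (((key i P hi a).mp ha).trans ((key i P hi b).mp hb).symm)
  · intro P hP
    obtain ⟨i, hi⟩ := Set.mem_iUnion.mp (hCcover ▸ hP)
    exact ⟨F i, (key i P hi (F i)).mpr rfl⟩
end

section
/- Let φ : Set X be nonempty, H a finite nonempty set of functions X → Y partitioned into clusters C₁, …, C_N by equality of strongest postconditions under φ, let F : {1,…,N} → {1,…,k} be a mapping with bins B_j := ⋃_{F(i)=j} C_i, and let ψ₁, …, ψ_k satisfy the separator conditions for B₁, …, B_k. Then for every j, the answer set H_{φ,j} := {P ∈ H : P '' φ ⊆ ψ_j} equals B_j, and consequently the disambiguation power of the induced query satisfies dpower(φ, ψ₁, …, ψ_k) = 1 − max_{j∈[k]} |B_j| / |H|. -/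
/-- For separators `ψ₁, …, ψ_k` of the bins `B j` induced by a mapping `F` on
the sp-partition of `H` w.r.t. `φ`, each answer set `{P ∈ H | P '' φ ⊆ ψ j}`
equals the bin `B j`, and hence the disambiguation power of the induced query
equals `1 − max_j |B j| / |H|`. -/
theorem stmt_11 {X Y : Type*} (φ : Set X) (hφ : φ.Nonempty)
    (H : Set (X → Y)) (hfin : H.Finite) (hne : H.Nonempty)
    (N k : ℕ)
    (C : Fin N → Set (X → Y))
    (hCsub : ∀ i, C i ⊆ H)
    (hCdisj : ∀ i j, i ≠ j → Disjoint (C i) (C j))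
    (hCcover : ⋃ i, C i = H)
    (hCsame : ∀ i, ∀ P ∈ C i, ∀ Q ∈ C i, P '' φ = Q '' φ)
    (hCdiff : ∀ i j, i ≠ j → ∀ P ∈ C i, ∀ Q ∈ C j, P '' φ ≠ Q '' φ)
    (F : Fin N → Fin k)
    (B : Fin k → Set (X → Y))
    (hB : ∀ j, B j = {P | ∃ i, F i = j ∧ P ∈ C i})
    (ψ : Fin k → Set Y)
    (hsep₁ : ∀ j, (⋃ P ∈ B j, P '' φ) ⊆ ψ j)
    (hsep₂ : ∀ j r, r ≠ j → ψ j ∩ (⋃ P ∈ B r, P '' φ) = ∅) :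
    (∀ j, {P ∈ H | P '' φ ⊆ ψ j} = B j) ∧
    (1 - ⨆ j : Fin k, (({P ∈ H | P '' φ ⊆ ψ j}).ncard : ℝ) / H.ncard)
      = 1 - ⨆ j : Fin k, ((B j).ncard : ℝ) / H.ncard := by
  have key : ∀ j, {P ∈ H | P '' φ ⊆ ψ j} = B j := by
    intro j
    ext P
    constructor
    · rintro ⟨hPH, hPsub⟩
      rw [← hCcover] at hPH
      obtain ⟨_, ⟨i, rfl⟩, hPi⟩ := hPH
      have hPB : P ∈ B (F i) := by rw [hB]; exact ⟨i, rfl, hPi⟩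
      by_cases hr : F i = j
      · exact hr ▸ hPB
      · exfalso
        obtain ⟨x, hx⟩ := hφ
        have hmem : P x ∈ ψ j ∩ (⋃ Q ∈ B (F i), Q '' φ) :=
          ⟨hPsub ⟨x, hx, rfl⟩, Set.mem_biUnion hPB ⟨x, hx, rfl⟩⟩
        rw [hsep₂ j (F i) hr] at hmem
        exact hmem
    · intro hPB
      have hPH : P ∈ H := by
        rw [hB] at hPB
        obtain ⟨i, _, hPi⟩ := hPB
        exact hCsub i hPi
      refine ⟨hPH, ?_⟩
      intro y hy
      exact hsep₁ j (Set.mem_biUnion hPB hy)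
  refine ⟨key, ?_⟩
  congr 1
  exact iSup_congr fun j => by rw [key j]
end
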